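/- Let c_0, c > 0, let β = (β_j) be a sequence of nonnegative reals, and let (Υ_ν) be indexed by finitely supported multi-indices with Υ_0 ≤ c_0 and, for ν ≠ 0, Υ_ν ≤ Σ_{0≠m≤ν, |supp(m)|≤q} c^{|m|} C(ν,m) Υ_{ν−m} Π_{j∈supp(m)} β_j. Then Υ_ν ≤ c_0 · c^{|ν|} · Σ_{m≤ν} m!·D_q(m)·β^m·Π_i S(ν_i,m_i) for all ν, where D_q(0)=1 and D_q(m) = Σ_{u⊆supp(m), 1≤|u|≤q} D_q(m−e_u). -/

import Mathlib

/-- Stirling numbers of the second kind. -/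
def stirling : ℕ → ℕ → ℕ
  | 0, 0 => 1
  | 0, _ + 1 => 0
  | _ + 1, 0 => 0
  | n + 1, m + 1 => (m + 1) * stirling n (m + 1) + stirling n m

/-- Order (total degree) of a finitely supported multi-index. -/
def deg (m : ℕ →₀ ℕ) : ℕ := m.sum fun _ k => k

/-- Multi-index factorial `m! = Π_i (m_i)!`. -/
def mfact (m : ℕ →₀ ℕ) : ℕ := ∏ i ∈ m.support, (m i).factorial

/-- Multivariate binomial coefficient `C(ν, m) = Π_i C(ν_i, m_i)`. -/
def mchoose (ν m : ℕ →₀ ℕ) : ℕ := ∏ i ∈ ν.support, (ν i).choose (m i)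

/-- The multi-index `e_u = Σ_{j ∈ u} e_j`. -/
noncomputable def eU (u : Finset ℕ) : ℕ →₀ ℕ := ∑ j ∈ u, Finsupp.single j 1

/-!
Let `G ν = Σ_{m ≤ ν} m! D(m) β^m Π_i S(ν_i, m_i)`. Induction on `ν` (componentwise order) proves
`Υ ν ≤ c₀ c^|ν| G ν` as soon as `Σ_{0 ≠ m ≤ ν, |supp m| ≤ q} C(ν,m) β^{supp m} G(ν - m) ≤ G ν`.
To see this, group the left side by `u = supp m` and exchange the sums: for fixed `u` and `k` the
sum over `m` factorizes over the coordinates, and `Σ_{1 ≤ l ≤ n} C(n,l) S(n-l,k) = (k+1) S(n,k+1)`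
turns it into `(k+e_u)! D(k) β^{k+e_u} Π_i S(ν_i, (k+e_u)_i)`. Substituting `n = k + e_u` and
summing over `u` first, the recursion for `D` gives back `G ν` without its `m = 0` term.
-/

open Finset Nat

theorem stirling_eq_stirlingSecond : stirling = stirlingSecond := by
  funext n k
  induction n generalizing k with
  | zero => cases k <;> rfl
  | succ n ih => cases k <;> simp [stirling, stirlingSecond_succ_succ, ih]

namespace Nat

theorem sum_antidiagonal_choose_mul_stirlingSecond (n k : ℕ) :
    ∑ ij ∈ antidiagonal n, n.choose ij.1 * stirlingSecond ij.2 k =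
      stirlingSecond (n + 1) (k + 1) := by
  induction n generalizing k with
  | zero => simp [stirlingSecond_succ_succ]
  | succ n ih =>
    have hsplit := sum_antidiagonal_choose_succ_mul (R := ℕ) (fun _ j => stirlingSecond j k) n
    have hsymm : ∑ ij ∈ antidiagonal n, n.choose ij.2 * stirlingSecond ij.2 k =
        ∑ ij ∈ antidiagonal n, n.choose ij.1 * stirlingSecond ij.2 k :=
      sum_congr rfl fun ij hij => by
        rw [choose_symm_of_eq_add (mem_antidiagonal.mp hij).symm]
    simp only [Nat.cast_id] at hsplit
    rw [hsplit, hsymm, ih]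
    cases k with
    | zero => simp [stirlingSecond_one_right]
    | succ k =>
      simp only [stirlingSecond_succ_succ _ (k + 1), stirlingSecond_succ_succ, mul_add,
        sum_add_distrib, mul_left_comm _ (k + 1), ← mul_sum, ih]
      ring

theorem sum_range_choose_mul_stirlingSecond_sub (n k : ℕ) :
    ∑ l ∈ range (n + 1), n.choose l * stirlingSecond (n - l) k =
      stirlingSecond (n + 1) (k + 1) := by
  rw [← sum_antidiagonal_choose_mul_stirlingSecond,
    Finset.Nat.sum_antidiagonal_eq_sum_range_succ_mk]

theorem sum_filter_ne_zero_choose_mul_stirlingSecond_sub (n k : ℕ) :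
    ∑ l ∈ (range (n + 1)).filter (· ≠ 0), n.choose l * stirlingSecond (n - l) k =
      (k + 1) * stirlingSecond n (k + 1) := by
  have h := sum_range_choose_mul_stirlingSecond_sub n k
  rw [← sum_filter_add_sum_filter_not _ (· ≠ 0), stirlingSecond_succ_succ] at h
  simp only [not_not, Finset.filter_eq', mem_range, Nat.zero_lt_succ, if_true, sum_singleton,
    Nat.choose_zero_right, Nat.sub_zero, one_mul] at h
  omega

end Nat

theorem Finset.sum_finsupp_prod_eq_prod_sum {ι α M : Type*} [Zero α] [CommSemiring M]
    (s : Finset ι) (t : ι → Finset α) (g : ι → α → M) :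
    ∑ f ∈ s.finsupp t, ∏ i ∈ s, g i (f i) = ∏ i ∈ s, ∑ a ∈ t i, g i a := by
  classical
  rw [prod_sum, Finset.finsupp, sum_map]
  refine sum_congr rfl fun p _ => ?_
  rw [← prod_attach s]
  refine prod_congr rfl fun i _ => ?_
  simp [Finsupp.indicator_of_mem i.2]

namespace Finsupp

theorem tsub_lt_self_of_le {ι : Type*} {ν m : ι →₀ ℕ} (hmν : m ≤ ν) (hm : m ≠ 0) : ν - m < ν :=
  lt_of_le_of_ne tsub_le_self fun heq => hm (by simpa [heq] using tsub_add_cancel_of_le hmν)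

variable {ι M : Type*} [DecidableEq ι] [CommSemiring M]

theorem sum_Iic_prod_eq_prod_sum (ν : ι →₀ ℕ) (g : ι → ℕ → M) :
    ∑ m ∈ Iic ν, ∏ i ∈ ν.support, g i (m i) = ∏ i ∈ ν.support, ∑ l ∈ range (ν i + 1), g i l := by
  rw [Iic_eq_Icc, bot_eq_zero, Icc_eq, support_zero, empty_union, sum_finsupp_prod_eq_prod_sum]
  simp [Nat.range_succ_eq_Icc_zero]

theorem sum_Iic_filter_support_eq_prod_sum {ν : ι →₀ ℕ} {u : Finset ι} (hu : u ⊆ ν.support)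
    (g : ι → ℕ → M) :
    ∑ m ∈ (Iic ν).filter (·.support = u), ∏ i ∈ ν.support, g i (m i) =
      ∏ i ∈ ν.support, ∑ l ∈ (range (ν i + 1)).filter (fun l => l ≠ 0 ↔ i ∈ u), g i l := by
  simp only [sum_filter, ← sum_Iic_prod_eq_prod_sum]
  refine Finset.sum_congr rfl fun m hm => ?_
  have hm : m.support ⊆ ν.support := support_mono (mem_Iic.mp hm)
  rw [prod_ite_zero]
  refine if_congr ⟨?_, fun h => ?_⟩ rfl rfl
  · rintro rfl i -
    exact mem_support_iff.symm
  · ext i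
    by_cases hi : i ∈ ν.support
    · simpa using h i hi
    · exact iff_of_false (fun h' => hi (hm h')) (fun h' => hi (hu h'))

end Finsupp

lemma deg_eq_degree (m : ℕ →₀ ℕ) : deg m = m.degree := rfl

lemma deg_add_deg_tsub {ν m : ℕ →₀ ℕ} (h : m ≤ ν) : deg m + deg (ν - m) = deg ν := by
  rw [deg_eq_degree, deg_eq_degree, deg_eq_degree, ← map_add, add_tsub_cancel_of_le h]

lemma mfact_eq_prod_of_support_subset {m : ℕ →₀ ℕ} {s : Finset ℕ} (h : m.support ⊆ s) :
    mfact m = ∏ i ∈ s, (m i)! :=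
  Finsupp.prod_of_support_subset m h (fun _ k => k !) fun _ _ => rfl

lemma eU_apply (u : Finset ℕ) (i : ℕ) : eU u i = if i ∈ u then 1 else 0 := by
  classical
  simp [eU, Finsupp.finsetSum_apply, Finsupp.single_apply]

lemma support_eU (u : Finset ℕ) : (eU u).support = u := by
  ext i
  simp [eU_apply]

lemma eU_le_iff {u : Finset ℕ} {n : ℕ →₀ ℕ} : eU u ≤ n ↔ u ⊆ n.support := by
  simp only [Finsupp.le_def, eU_apply, subset_iff, Finsupp.mem_support_iff]
  refine ⟨fun h i hi => ?_, fun h i => ?_⟩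
  · have := h i
    rw [if_pos hi] at this
    omega
  · split_ifs with hi
    · exact Nat.one_le_iff_ne_zero.mpr (h hi)
    · exact Nat.zero_le _

lemma support_add_eU_subset {ν k : ℕ →₀ ℕ} {u : Finset ℕ} (hk : k ≤ ν) (hu : u ⊆ ν.support) :
    (k + eU u).support ⊆ ν.support :=
  Finsupp.support_add.trans (union_subset (Finsupp.support_mono hk) ((support_eU u).le.trans hu))

lemma prod_pow_add_eU (β : ℕ → ℝ) (k : ℕ →₀ ℕ) (u : Finset ℕ) :
    ∏ j ∈ (k + eU u).support, β j ^ (k + eU u) j =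
      (∏ j ∈ k.support, β j ^ k j) * ∏ j ∈ u, β j := by
  have hadd := Finsupp.prod_add_index' (f := k) (g := eU u) (h := fun j e => β j ^ e)
    (fun _ => pow_zero _) (fun _ _ _ => pow_add _ _ _)
  have heU : ∏ j ∈ (eU u).support, β j ^ eU u j = ∏ j ∈ u, β j := by
    rw [support_eU]
    exact prod_congr rfl fun j hj => by rw [eU_apply, if_pos hj, pow_one]
  exact hadd.trans (congrArg _ heU)

lemma sum_Iic_add_eU {M : Type*} [AddCommMonoid M] {ν : ℕ →₀ ℕ} {u : Finset ℕ}
    (f : (ℕ →₀ ℕ) → (ℕ →₀ ℕ) → M) (hf : ∀ k ≤ ν, ¬k + eU u ≤ ν → f (k + eU u) k = 0) :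
    ∑ k ∈ Iic ν, f (k + eU u) k = ∑ n ∈ (Iic ν).filter (eU u ≤ ·), f n (n - eU u) := by
  rw [← sum_filter_of_ne (p := (· + eU u ≤ ν)) fun k hk hne =>
    by_contra fun h => hne (hf k (mem_Iic.mp hk) h)]
  refine sum_nbij' (· + eU u) (· - eU u) (fun k hk => ?_) (fun n hn => ?_) (fun k _ => ?_)
    (fun n hn => ?_) (fun k _ => ?_)
  · simp only [mem_filter, mem_Iic] at hk ⊢
    exact ⟨hk.2, le_add_self⟩
  · simp only [mem_filter, mem_Iic] at hn ⊢
    exact ⟨tsub_le_self.trans hn.1, (tsub_add_cancel_of_le hn.2).le.trans hn.1⟩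
  · exact add_tsub_cancel_right k (eU u)
  · exact tsub_add_cancel_of_le (mem_filter.mp hn).2
  · simp only [add_tsub_cancel_right]

def boundedSubsets (q : ℕ) (s : Finset ℕ) : Finset (Finset ℕ) :=
  s.powerset.filter fun u => 1 ≤ u.card ∧ u.card ≤ q

lemma sum_filter_card_support_le_eq_sum_boundedSubsets {M : Type*} [AddCommMonoid M] (q : ℕ)
    (ν : ℕ →₀ ℕ) (f : (ℕ →₀ ℕ) → M) :
    ∑ m ∈ ((Iic ν).erase 0).filter (·.support.card ≤ q), f m =
      ∑ u ∈ boundedSubsets q ν.support, ∑ m ∈ (Iic ν).filter (·.support = u), f m := by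
  refine (sum_fiberwise_of_maps_to (g := Finsupp.support) (fun m hm => ?_) f).symm.trans
    (sum_congr rfl fun u hu => sum_congr ?_ fun _ _ => rfl)
  · simp only [mem_filter, mem_erase, mem_Iic] at hm
    simp only [boundedSubsets, mem_filter, mem_powerset, Nat.one_le_iff_ne_zero, ne_eq,
      Finset.card_eq_zero, Finsupp.support_eq_empty]
    exact ⟨Finsupp.support_mono hm.1.2, hm.1.1, hm.2⟩
  · ext m
    simp only [boundedSubsets, mem_filter, mem_powerset, mem_erase, mem_Iic] at hu ⊢
    constructor
    · exact fun h => ⟨h.1.1.2, h.2⟩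
    · rintro ⟨hm, rfl⟩
      exact ⟨⟨⟨fun h0 => by simp [h0] at hu, hm⟩, hu.2.2⟩, rfl⟩

lemma sum_boundedSubsets_le {q : ℕ} {D : (ℕ →₀ ℕ) → ℕ}
    (hDrec : ∀ m : ℕ →₀ ℕ, m ≠ 0 → D m = ∑ u ∈ boundedSubsets q m.support, D (m - eU u))
    (n : ℕ →₀ ℕ) : ∑ u ∈ boundedSubsets q n.support, D (n - eU u) ≤ D n := by
  rcases eq_or_ne n 0 with rfl | hn
  · simp [boundedSubsets, Finset.filter_singleton]
  · exact (hDrec n hn).ge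

lemma prod_stirlingSecond_eq_zero_of_not_le {μ n : ℕ →₀ ℕ} {s : Finset ℕ}
    (hs : n.support ⊆ s) (h : ¬n ≤ μ) : ∏ i ∈ s, (stirlingSecond (μ i) (n i) : ℝ) = 0 := by
  obtain ⟨i, hi⟩ : ∃ i, μ i < n i := by simpa [Finsupp.le_def] using h
  refine prod_eq_zero (hs (Finsupp.mem_support_iff.mpr ((Nat.zero_le _).trans_lt hi).ne')) ?_
  rw [stirlingSecond_eq_zero_of_lt hi, Nat.cast_zero]

lemma mfact_mul_sum_mchoose_mul_prod_stirlingSecond {ν k : ℕ →₀ ℕ} {u : Finset ℕ}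
    (hu : u ⊆ ν.support) (hk : k ≤ ν) :
    mfact k * ∑ m ∈ (Iic ν).filter (·.support = u),
        mchoose ν m * ∏ i ∈ ν.support, stirlingSecond ((ν - m) i) (k i) =
      mfact (k + eU u) * ∏ i ∈ ν.support, stirlingSecond (ν i) ((k + eU u) i) := by
  simp only [mchoose, ← prod_mul_distrib, Finsupp.tsub_apply]
  rw [Finsupp.sum_Iic_filter_support_eq_prod_sum hu
      fun i l => (ν i).choose l * stirlingSecond (ν i - l) (k i),
    mfact_eq_prod_of_support_subset (Finsupp.support_mono hk),
    mfact_eq_prod_of_support_subset (support_add_eU_subset hk hu),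
    ← prod_mul_distrib, ← prod_mul_distrib]
  refine prod_congr rfl fun i _ => ?_
  by_cases hi : i ∈ u
  · simp only [hi, iff_true, Finsupp.add_apply, eU_apply, if_true,
      sum_filter_ne_zero_choose_mul_stirlingSecond_sub, factorial_succ]
    ring
  · simp [hi, eU_apply, Finset.filter_eq']

noncomputable def stirlingMajorant (β : ℕ → ℝ) (D : (ℕ →₀ ℕ) → ℕ) (ν : ℕ →₀ ℕ) : ℝ :=
  ∑ m ∈ Iic ν, (mfact m : ℝ) * D m * (∏ j ∈ m.support, β j ^ m j) *
    ∏ i ∈ ν.support, ((stirlingSecond (ν i) (m i) : ℕ) : ℝ)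

section Majorant

variable (β : ℕ → ℝ) (D : (ℕ →₀ ℕ) → ℕ)

lemma stirlingMajorant_zero (hD0 : D 0 = 1) : stirlingMajorant β D 0 = 1 := by
  simp [stirlingMajorant, mfact, hD0, show Iic (0 : ℕ →₀ ℕ) = {0} by ext; simp]

lemma stirlingMajorant_eq_sum_Iic_of_le {μ ν : ℕ →₀ ℕ} (h : μ ≤ ν) :
    stirlingMajorant β D μ = ∑ k ∈ Iic ν, (mfact k : ℝ) * D k * (∏ j ∈ k.support, β j ^ k j) *
      ∏ i ∈ ν.support, (stirlingSecond (μ i) (k i) : ℝ) := by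
  refine sum_subset_zero_on_sdiff (Iic_subset_Iic.mpr h) (fun k hk => ?_) (fun k hk => ?_)
  · obtain ⟨hkν, hkμ⟩ : k ≤ ν ∧ ¬k ≤ μ := by simpa using hk
    rw [prod_stirlingSecond_eq_zero_of_not_le (Finsupp.support_mono hkν) hkμ, mul_zero]
  · refine congrArg _ (prod_subset (Finsupp.support_mono h) fun i _ hi => ?_)
    have hμi : μ i = 0 := Finsupp.notMem_support_iff.mp hi
    have hki : k i = 0 := by have := Finsupp.le_def.mp (mem_Iic.mp hk) i; omega
    simp [hμi, hki]

lemma sum_mchoose_mul_prod_mul_term_eq {ν k : ℕ →₀ ℕ} {u : Finset ℕ} (hu : u ⊆ ν.support)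
    (hk : k ≤ ν) :
    ∑ m ∈ (Iic ν).filter (·.support = u), (mchoose ν m : ℝ) * (∏ j ∈ m.support, β j) *
        ((mfact k : ℝ) * D k * (∏ j ∈ k.support, β j ^ k j) *
          ∏ i ∈ ν.support, (stirlingSecond ((ν - m) i) (k i) : ℝ)) =
      (mfact (k + eU u) : ℝ) * D k * (∏ j ∈ (k + eU u).support, β j ^ (k + eU u) j) *
        ∏ i ∈ ν.support, (stirlingSecond (ν i) ((k + eU u) i) : ℝ) := by
  have hnat : (mfact k : ℝ) * ∑ m ∈ (Iic ν).filter (·.support = u),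
        (mchoose ν m : ℝ) * ∏ i ∈ ν.support, (stirlingSecond ((ν - m) i) (k i) : ℝ) =
      mfact (k + eU u) * ∏ i ∈ ν.support, (stirlingSecond (ν i) ((k + eU u) i) : ℝ) := by
    exact_mod_cast mfact_mul_sum_mchoose_mul_prod_stirlingSecond hu hk
  calc _ = (∏ j ∈ u, β j) * D k * (∏ j ∈ k.support, β j ^ k j) *
        ((mfact k : ℝ) * ∑ m ∈ (Iic ν).filter (·.support = u),
          (mchoose ν m : ℝ) * ∏ i ∈ ν.support, (stirlingSecond ((ν - m) i) (k i) : ℝ)) := by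
        simp only [mul_sum]
        refine sum_congr rfl fun m hm => ?_
        rw [(mem_filter.mp hm).2]
        ring
    _ = _ := by
        rw [hnat, prod_pow_add_eU]
        ring

variable {β D}

theorem sum_mchoose_mul_stirlingMajorant_sub_le {q : ℕ} (hβ : ∀ j, 0 ≤ β j)
    (hDrec : ∀ m : ℕ →₀ ℕ, m ≠ 0 → D m = ∑ u ∈ boundedSubsets q m.support, D (m - eU u))
    (ν : ℕ →₀ ℕ) :
    ∑ m ∈ ((Iic ν).erase 0).filter (·.support.card ≤ q),
        (mchoose ν m : ℝ) * (∏ j ∈ m.support, β j) * stirlingMajorant β D (ν - m) ≤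
      stirlingMajorant β D ν := by
  set Φ : (ℕ →₀ ℕ) → (ℕ →₀ ℕ) → ℝ := fun n k => (mfact n : ℝ) * D k *
    (∏ j ∈ n.support, β j ^ n j) * ∏ i ∈ ν.support, (stirlingSecond (ν i) (n i) : ℝ)
  have hsubset {u} (hu : u ∈ boundedSubsets q ν.support) : u ⊆ ν.support :=
    mem_powerset.mp (mem_filter.mp hu).1
  calc _ = ∑ u ∈ boundedSubsets q ν.support, ∑ m ∈ (Iic ν).filter (·.support = u),
        (mchoose ν m : ℝ) * (∏ j ∈ m.support, β j) * stirlingMajorant β D (ν - m) :=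
        sum_filter_card_support_le_eq_sum_boundedSubsets q ν _
    _ = ∑ u ∈ boundedSubsets q ν.support, ∑ k ∈ Iic ν, Φ (k + eU u) k := by
        refine sum_congr rfl fun u hu => ?_
        simp only [stirlingMajorant_eq_sum_Iic_of_le β D (tsub_le_self (a := ν)), mul_sum]
        rw [sum_comm]
        exact sum_congr rfl fun k hk =>
          sum_mchoose_mul_prod_mul_term_eq β D (hsubset hu) (mem_Iic.mp hk)
    _ = ∑ u ∈ boundedSubsets q ν.support, ∑ n ∈ (Iic ν).filter (eU u ≤ ·), Φ n (n - eU u) := by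
        refine sum_congr rfl fun u hu => sum_Iic_add_eU _ fun k hk hkν => ?_
        simp only [Φ, prod_stirlingSecond_eq_zero_of_not_le
          (support_add_eU_subset hk (hsubset hu)) hkν, mul_zero]
    _ = ∑ n ∈ Iic ν, ∑ u ∈ boundedSubsets q n.support, Φ n (n - eU u) := by
        refine sum_comm' fun u n => ?_
        simp only [boundedSubsets, mem_filter, mem_powerset, mem_Iic, eU_le_iff]
        constructor
        · rintro ⟨⟨-, hcard⟩, hn, hun⟩
          exact ⟨⟨hun, hcard⟩, hn⟩
        · rintro ⟨⟨hun, hcard⟩, hn⟩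
          exact ⟨⟨hun.trans (Finsupp.support_mono hn), hcard⟩, hn, hun⟩
    _ ≤ stirlingMajorant β D ν := by
        refine sum_le_sum fun n _ => ?_
        simp only [Φ, ← sum_mul, ← mul_sum]
        have hβn : 0 ≤ ∏ j ∈ n.support, β j ^ n j := prod_nonneg fun j _ => pow_nonneg (hβ j) _
        gcongr
        exact_mod_cast sum_boundedSubsets_le hDrec n

end Majorant

theorem stmt_18_general (q : ℕ) (c₀ c : ℝ) (hc₀ : 0 < c₀) (hc : 0 < c)
    (β : ℕ → ℝ) (hβ : ∀ j, 0 ≤ β j)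
    (D : (ℕ →₀ ℕ) → ℕ) (hD0 : D 0 = 1)
    (hDrec : ∀ m : ℕ →₀ ℕ, m ≠ 0 →
      D m = ∑ u ∈ m.support.powerset.filter (fun u => 1 ≤ u.card ∧ u.card ≤ q),
        D (m - eU u))
    (Υ : (ℕ →₀ ℕ) → ℝ)
    (h0 : Υ 0 ≤ c₀)
    (hrec : ∀ ν : ℕ →₀ ℕ, ν ≠ 0 →
      Υ ν ≤ ∑ m ∈ ((Finset.Iic ν).erase 0).filter (fun m => m.support.card ≤ q),
        c ^ deg m * mchoose ν m * Υ (ν - m) * ∏ j ∈ m.support, β j) :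
    ∀ ν : ℕ →₀ ℕ,
      Υ ν ≤ c₀ * c ^ deg ν *
        ∑ m ∈ Finset.Iic ν,
          (mfact m : ℝ) * D m * (∏ j ∈ m.support, β j ^ m j) *
            ∏ i ∈ ν.support, ((stirling (ν i) (m i) : ℕ) : ℝ) := by
  rw [stirling_eq_stirlingSecond]
  intro ν
  induction ν using WellFoundedLT.induction with
  | _ ν ih =>
  change Υ ν ≤ c₀ * c ^ deg ν * stirlingMajorant β D ν
  rcases eq_or_ne ν 0 with rfl | hν
  · simpa [stirlingMajorant_zero β D hD0, deg_eq_degree] using h0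
  calc Υ ν ≤ _ := hrec ν hν
    _ ≤ ∑ m ∈ ((Iic ν).erase 0).filter (·.support.card ≤ q), c ^ deg m * mchoose ν m *
          (c₀ * c ^ deg (ν - m) * stirlingMajorant β D (ν - m)) * ∏ j ∈ m.support, β j := by
        refine sum_le_sum fun m hm => ?_
        obtain ⟨hm0, hmν⟩ : m ≠ 0 ∧ m ≤ ν := by simpa using (mem_filter.mp hm).1
        have hβm : 0 ≤ ∏ j ∈ m.support, β j := prod_nonneg fun j _ => hβ j
        gcongr
        exact ih _ (Finsupp.tsub_lt_self_of_le hmν hm0)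
    _ = c₀ * c ^ deg ν * ∑ m ∈ ((Iic ν).erase 0).filter (·.support.card ≤ q),
          (mchoose ν m : ℝ) * (∏ j ∈ m.support, β j) * stirlingMajorant β D (ν - m) := by
        rw [mul_sum]
        refine sum_congr rfl fun m hm => ?_
        have hmν : m ≤ ν := mem_Iic.mp (mem_erase.mp (mem_filter.mp hm).1).2
        rw [← deg_add_deg_tsub hmν, pow_add]
        ring
    _ ≤ c₀ * c ^ deg ν * stirlingMajorant β D ν := by
        gcongr
        exact sum_mchoose_mul_stirlingMajorant_sub_le hβ hDrec ν

theorem stmt_18 (q : ℕ) (hq : 1 ≤ q) (c₀ c : ℝ) (hc₀ : 0 < c₀) (hc : 0 < c)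
    (β : ℕ → ℝ) (hβ : ∀ j, 0 ≤ β j)
    (D : (ℕ →₀ ℕ) → ℕ) (hD0 : D 0 = 1)
    (hDrec : ∀ m : ℕ →₀ ℕ, m ≠ 0 →
      D m = ∑ u ∈ m.support.powerset.filter (fun u => 1 ≤ u.card ∧ u.card ≤ q),
        D (m - eU u))
    (Υ : (ℕ →₀ ℕ) → ℝ) (hΥnn : ∀ ν, 0 ≤ Υ ν)
    (h0 : Υ 0 ≤ c₀)
    (hrec : ∀ ν : ℕ →₀ ℕ, ν ≠ 0 →
      Υ ν ≤ ∑ m ∈ ((Finset.Iic ν).erase 0).filter (fun m => m.support.card ≤ q),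
        c ^ deg m * mchoose ν m * Υ (ν - m) * ∏ j ∈ m.support, β j) :
    ∀ ν : ℕ →₀ ℕ,
      Υ ν ≤ c₀ * c ^ deg ν *
        ∑ m ∈ Finset.Iic ν,
          (mfact m : ℝ) * D m * (∏ j ∈ m.support, β j ^ m j) *
            ∏ i ∈ ν.support, ((stirling (ν i) (m i) : ℕ) : ℝ) :=
  stmt_18_general q c₀ c hc₀ hc β hβ D hD0 hDrec Υ h0 hrec
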